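/- arXiv:1812.06921 — 4 statements merged into one kernel-verified Lean document; each statement's English description precedes it below -/
import Mathlib

section
/- Let X be a random variable on a probability space with X > 0 almost surely and with log X square-integrable. Define the quantile function of X by Θ_X(p) = inf{ a ∈ ℝ : P(X ≤ a) ≥ p }. Then for all p, q ∈ (0,1) one has Θ_X(q) ≤ exp( sqrt(Var(log X)) · ( (1−q)^{−1/2} + p^{−1/2} ) ) · Θ_X(p). -/
/-!
Write `Y = log X`, `m = 𝔼[Y]` and `σ² = Var Y`. Chebyshev's inequality puts mass at least `q` on
`{Y ≤ m + σ / √(1 - q)}` and mass less than `p` on `{Y ≤ m - c}` for every `c > σ / √p`. Hence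
`Θ_X(q) ≤ exp (m + σ / √(1 - q))` and `exp (m - σ / √p) ≤ Θ_X(p)`, and dividing the two bounds
gives the claim.
-/

open MeasureTheory ProbabilityTheory Real

noncomputable def quantile {Ω : Type*} [MeasurableSpace Ω] (μ : Measure Ω) (X : Ω → ℝ) (p : ℝ) :
    ℝ :=
  sInf {a : ℝ | ENNReal.ofReal p ≤ μ {ω | X ω ≤ a}}

lemma Real.rpow_neg_one_div_two {r : ℝ} (hr : 0 ≤ r) : r ^ (-(1 : ℝ) / 2) = (√r)⁻¹ := by
  rw [neg_div, rpow_neg hr, sqrt_eq_rpow, one_div]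

lemma Real.lt_mul_sq_of_sqrt_div_sqrt_lt {v t c : ℝ} (ht : 0 < t)
    (h : √v / √t < c) : v < t * c ^ 2 := by
  have hc : 0 < c := (div_nonneg (sqrt_nonneg v) (sqrt_nonneg t)).trans_lt h
  rw [← sqrt_div' v ht.le, sqrt_lt' hc, div_lt_iff₀ ht] at h
  linarith

section Chebyshev

variable {Ω : Type*} [MeasurableSpace Ω] {μ : Measure Ω} [IsProbabilityMeasure μ] {Y : Ω → ℝ}

lemma ofReal_le_measure_le_integral_add (hY : MemLp Y 2 μ) {r c : ℝ} (hr : r < 1)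
    (hc : √(variance Y μ) / √(1 - r) < c) :
    ENNReal.ofReal r ≤ μ {ω | Y ω ≤ μ[Y] + c} := by
  have hvar := lt_mul_sq_of_sqrt_div_sqrt_lt (sub_pos.2 hr) hc
  have hc0 : 0 < c := (div_nonneg (sqrt_nonneg _) (sqrt_nonneg _)).trans_lt hc
  have hcover : Set.univ ⊆ {ω | Y ω ≤ μ[Y] + c} ∪ {ω | c ≤ |Y ω - μ[Y]|} := by
    intro ω _
    by_cases hω : Y ω ≤ μ[Y] + c
    · exact Or.inl hω
    · right
      show c ≤ |Y ω - μ[Y]|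
      rw [le_abs]
      left
      linarith [not_le.1 hω]
  have htail : μ {ω | c ≤ |Y ω - μ[Y]|} ≤ ENNReal.ofReal (1 - r) :=
    (meas_ge_le_variance_div_sq hY hc0).trans
      (ENNReal.ofReal_le_ofReal ((div_le_iff₀ (by positivity)).2 hvar.le))
  calc ENNReal.ofReal r = 1 - ENNReal.ofReal (1 - r) := by
        rw [← ENNReal.ofReal_one, ← ENNReal.ofReal_sub _ (sub_pos.2 hr).le, sub_sub_cancel]
    _ ≤ μ {ω | Y ω ≤ μ[Y] + c} := by
        rw [tsub_le_iff_right, ← measure_univ (μ := μ)]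
        exact (measure_mono hcover).trans ((measure_union_le _ _).trans (by gcongr))

lemma measure_le_integral_sub_lt_ofReal (hY : MemLp Y 2 μ) {p c : ℝ} (hp : 0 < p)
    (hc : √(variance Y μ) / √p < c) :
    μ {ω | Y ω ≤ μ[Y] - c} < ENNReal.ofReal p := by
  have hvar := lt_mul_sq_of_sqrt_div_sqrt_lt hp hc
  have hc0 : 0 < c := (div_nonneg (sqrt_nonneg _) (sqrt_nonneg _)).trans_lt hc
  calc μ {ω | Y ω ≤ μ[Y] - c} ≤ μ {ω | c ≤ |Y ω - μ[Y]|} :=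
        measure_mono fun ω (hω : Y ω ≤ μ[Y] - c) => by
          show c ≤ |Y ω - μ[Y]|
          rw [le_abs]
          right
          linarith
    _ ≤ ENNReal.ofReal (variance Y μ / c ^ 2) := meas_ge_le_variance_div_sq hY hc0
    _ < ENNReal.ofReal p :=
        (ENNReal.ofReal_lt_ofReal_iff hp).2 ((div_lt_iff₀ (by positivity)).2 hvar)

end Chebyshev

section LogQuantile

variable {Ω : Type*} [MeasurableSpace Ω] {μ : Measure Ω} {X : Ω → ℝ}

lemma measure_le_eq_zero_of_nonpos (hXpos : ∀ᵐ ω ∂μ, 0 < X ω) {a : ℝ} (ha : a ≤ 0) :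
    μ {ω | X ω ≤ a} = 0 :=
  measure_mono_null (fun ω (hω : X ω ≤ a) => (hω.trans ha).not_gt) (ae_iff.1 hXpos)

lemma bddBelow_quantile_set (hXpos : ∀ᵐ ω ∂μ, 0 < X ω) {p : ℝ} (hp : 0 < p) :
    BddBelow {a : ℝ | ENNReal.ofReal p ≤ μ {ω | X ω ≤ a}} := by
  refine ⟨0, fun a (ha : ENNReal.ofReal p ≤ _) => not_lt.1 fun ha0 => ?_⟩
  rw [measure_le_eq_zero_of_nonpos hXpos ha0.le] at ha
  exact (ENNReal.ofReal_pos.2 hp).not_ge ha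

variable [IsProbabilityMeasure μ] (hXpos : ∀ᵐ ω ∂μ, 0 < X ω)
  (hL2 : MemLp (fun ω => log (X ω)) 2 μ)
include hXpos hL2

lemma ofReal_le_measure_le_exp {r c : ℝ} (hr : r < 1)
    (hc : √(variance (fun ω => log (X ω)) μ) / √(1 - r) < c) :
    ENNReal.ofReal r ≤ μ {ω | X ω ≤ exp (μ[fun ω => log (X ω)] + c)} := by
  refine (ofReal_le_measure_le_integral_add hL2 hr hc).trans (measure_mono_ae ?_)
  filter_upwards [hXpos] with ω hω (hle : log (X ω) ≤ _)
  exact (log_le_iff_le_exp hω).1 hle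

lemma quantile_le_exp {q : ℝ} (hq : q ∈ Set.Ioo (0 : ℝ) 1) :
    quantile μ X q ≤
      exp (μ[fun ω => log (X ω)] + √(variance (fun ω => log (X ω)) μ) / √(1 - q)) := by
  -- Chebyshev needs a positive deviation, so the threshold is approached from above.
  refine le_of_forall_gt_imp_ge_of_dense fun b hb => ?_
  have hb0 : 0 < b := (exp_pos _).trans hb
  rw [← exp_log hb0] at hb ⊢
  refine csInf_le (bddBelow_quantile_set hXpos hq.1) ?_
  have := ofReal_le_measure_le_exp hXpos hL2 hq.2 (c := log b - μ[fun ω => log (X ω)])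
    (by linarith [exp_lt_exp.1 hb])
  rwa [add_sub_cancel] at this

lemma exp_le_quantile {p : ℝ} (hp : p ∈ Set.Ioo (0 : ℝ) 1) :
    exp (μ[fun ω => log (X ω)] - √(variance (fun ω => log (X ω)) μ) / √p) ≤
      quantile μ X p := by
  refine le_csInf ⟨_, ofReal_le_measure_le_exp hXpos hL2 hp.2 (lt_add_one _)⟩ fun a ha => ?_
  by_contra! hlt
  have ha0 : 0 < a := not_le.1 fun ha0 => (ENNReal.ofReal_pos.2 hp.1).not_ge
    (ha.trans_eq (measure_le_eq_zero_of_nonpos hXpos ha0))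
  have hlog : log a < μ[fun ω => log (X ω)] - _ := (log_lt_iff_lt_exp ha0).2 hlt
  have hsmall := measure_le_integral_sub_lt_ofReal hL2 hp.1
    (c := μ[fun ω => log (X ω)] - log a) (by linarith)
  rw [sub_sub_cancel] at hsmall
  refine hsmall.not_ge (ha.trans (measure_mono_ae ?_))
  filter_upwards [hXpos] with ω hω (hle : X ω ≤ a)
  exact log_le_log hω hle

end LogQuantile

theorem quantile_relation_general
    {Ω : Type*} [MeasurableSpace Ω] (μ : Measure Ω) [IsProbabilityMeasure μ]
    (X : Ω → ℝ) (hXpos : ∀ᵐ ω ∂μ, 0 < X ω)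
    (hL2 : MemLp (fun ω => Real.log (X ω)) 2 μ)
    (p q : ℝ) (hp : p ∈ Set.Ioo (0 : ℝ) 1) (hq : q ∈ Set.Ioo (0 : ℝ) 1) :
    sInf {a : ℝ | ENNReal.ofReal q ≤ μ {ω | X ω ≤ a}} ≤
      Real.exp (Real.sqrt (ProbabilityTheory.variance (fun ω => Real.log (X ω)) μ) *
          ((1 - q) ^ (-(1 : ℝ) / 2) + p ^ (-(1 : ℝ) / 2))) *
        sInf {a : ℝ | ENNReal.ofReal p ≤ μ {ω | X ω ≤ a}} := by
  set m := μ[fun ω => log (X ω)]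
  set σ := √(variance (fun ω => log (X ω)) μ)
  have hexponent : σ * ((1 - q) ^ (-(1 : ℝ) / 2) + p ^ (-(1 : ℝ) / 2)) =
      (m + σ / √(1 - q)) - (m - σ / √p) := by
    rw [rpow_neg_one_div_two (sub_pos.2 hq.2).le, rpow_neg_one_div_two hp.1.le]
    ring
  calc quantile μ X q ≤ exp (m + σ / √(1 - q)) := quantile_le_exp hXpos hL2 hq
    _ = exp (σ * ((1 - q) ^ (-(1 : ℝ) / 2) + p ^ (-(1 : ℝ) / 2))) * exp (m - σ / √p) := by
        rw [hexponent, ← exp_add, sub_add_cancel]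
    _ ≤ exp (σ * ((1 - q) ^ (-(1 : ℝ) / 2) + p ^ (-(1 : ℝ) / 2))) * quantile μ X p := by
        gcongr
        exact exp_le_quantile hXpos hL2 hp

/-- Let `X` be a positive random variable on a probability space with
`log X` square-integrable, and let `Θ_X(p) = inf { a : P(X ≤ a) ≥ p }` be its quantile
function.  Then for all `p, q ∈ (0,1)`,
`Θ_X(q) ≤ exp( sqrt(Var(log X)) · ((1−q)^{−1/2} + p^{−1/2}) ) · Θ_X(p)`. -/
theorem quantile_relation
    {Ω : Type*} [MeasurableSpace Ω] (μ : Measure Ω) [IsProbabilityMeasure μ]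
    (X : Ω → ℝ) (hXm : Measurable X) (hXpos : ∀ᵐ ω ∂μ, 0 < X ω)
    (hL2 : MemLp (fun ω => Real.log (X ω)) 2 μ)
    (p q : ℝ) (hp : p ∈ Set.Ioo (0 : ℝ) 1) (hq : q ∈ Set.Ioo (0 : ℝ) 1) :
    sInf {a : ℝ | ENNReal.ofReal q ≤ μ {ω | X ω ≤ a}} ≤
      Real.exp (Real.sqrt (ProbabilityTheory.variance (fun ω => Real.log (X ω)) μ) *
          ((1 - q) ^ (-(1 : ℝ) / 2) + p ^ (-(1 : ℝ) / 2))) *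
        sInf {a : ℝ | ENNReal.ofReal p ≤ μ {ω | X ω ≤ a}} :=
  quantile_relation_general μ X hXpos hL2 p q hp hq
end

section
/- Let 0 < p < 1/2 and let X_1, …, X_N be independent, identically distributed Bernoulli(p) random variables on a probability space, i.e. P(X_i = 1) = p and P(X_i = 0) = 1 − p for each i, with the family (X_i)_{i=1}^N independent. Let S_N = X_1 + ⋯ + X_N. Then P( S_N ≥ N/2 ) ≤ (8p)^{N/2}. -/
/-!
Almost surely every `X i` is `0` or `1`, so on the event `S_N ≥ N/2` the set `T` of indices
with `X i = 1` has at least `N/2` elements. By independence `P(X i = 1 for all i ∈ T) = p ^ #T`,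
and a union bound over the at most `2 ^ N` such sets gives `2 ^ N p ^ (N/2) = (4p) ^ (N/2)`.
-/

open MeasureTheory

section

open ProbabilityTheory Finset

variable {Ω : Type*} [MeasurableSpace Ω] {μ : Measure Ω}

lemma ae_eq_zero_or_eq_one_of_measure_eq [IsProbabilityMeasure μ] {f : Ω → ℝ}
    (hf : Measurable f) {p : ℝ} (hp0 : 0 ≤ p) (hp1 : p ≤ 1)
    (h1 : μ {ω | f ω = 1} = ENNReal.ofReal p)
    (h0 : μ {ω | f ω = 0} = ENNReal.ofReal (1 - p)) :
    ∀ᵐ ω ∂μ, f ω = 0 ∨ f ω = 1 := by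
  have hmeas : ∀ a : ℝ, MeasurableSet {ω | f ω = a} := fun a => hf (measurableSet_singleton a)
  rw [ae_iff_measure_eq (p := fun ω => f ω = 0 ∨ f ω = 1)
    ((hmeas 0).union (hmeas 1)).nullMeasurableSet, measure_univ, Set.ofPred_or,
    measure_union _ (hmeas 1), h0, h1,
    ← ENNReal.ofReal_add (by linarith) hp0, sub_add_cancel, ENNReal.ofReal_one]
  exact Set.disjoint_left.mpr fun ω (h0 : f ω = 0) (h1 : f ω = 1) => by simp [h0] at h1

lemma sum_eq_card_filter_eq_one {ι : Type*} [Fintype ι] {x : ι → ℝ}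
    (hx : ∀ i, x i = 0 ∨ x i = 1) : ∑ i, x i = #{i | x i = 1} := by
  classical
  rw [← sum_boole]
  refine sum_congr rfl fun i _ => ?_
  rcases hx i with h | h <;> simp [h]

lemma measure_le_sum_le_sum_measure_iInter {ι : Type*} [Fintype ι] {X : ι → Ω → ℝ}
    (hX : ∀ᵐ ω ∂μ, ∀ i, X i ω = 0 ∨ X i ω = 1) (k : ℝ) :
    μ {ω | k ≤ ∑ i, X i ω} ≤ ∑ T with k ≤ #T, μ (⋂ i ∈ T, {ω | X i ω = 1}) := by
  classical
  refine le_trans (measure_mono_ae ?_) (measure_biUnion_finset_le _ _)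
  filter_upwards [hX] with ω hω (hk : k ≤ ∑ i, X i ω)
  rw [sum_eq_card_filter_eq_one hω] at hk
  exact Set.mem_iUnion₂.mpr ⟨({i | X i ω = 1} : Finset ι),
    mem_filter.mpr ⟨mem_univ _, hk⟩, Set.mem_iInter₂.mpr fun i hi => (mem_filter.mp hi).2⟩

lemma ProbabilityTheory.iIndepFun.measure_iInter_eq_one_eq_pow {ι : Type*} {X : ι → Ω → ℝ}
    (hind : iIndepFun X μ) {q : ENNReal} (h1 : ∀ i, μ {ω | X i ω = 1} = q) (T : Finset ι) :
    μ (⋂ i ∈ T, {ω | X i ω = 1}) = q ^ #T := by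
  rw [← prod_const, ← prod_congr rfl fun i _ => h1 i]
  exact hind.measure_inter_preimage_eq_mul T (sets := fun _ => {1})
    fun _ _ => measurableSet_singleton 1

lemma measure_le_sum_le_two_pow_mul {ι : Type*} [Fintype ι] {X : ι → Ω → ℝ}
    (hX : ∀ᵐ ω ∂μ, ∀ i, X i ω = 0 ∨ X i ω = 1) (hind : iIndepFun X μ) {p : ℝ}
    (hp0 : 0 < p) (hp1 : p ≤ 1) (h1 : ∀ i, μ {ω | X i ω = 1} = ENNReal.ofReal p) (k : ℝ) :
    μ {ω | k ≤ ∑ i, X i ω} ≤ 2 ^ Fintype.card ι * ENNReal.ofReal (p ^ k) := by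
  have hterm : ∀ T ∈ ({T | k ≤ #T} : Finset (Finset ι)),
      μ (⋂ i ∈ T, {ω | X i ω = 1}) ≤ ENNReal.ofReal (p ^ k) := fun T hT => by
    rw [hind.measure_iInter_eq_one_eq_pow h1, ← ENNReal.ofReal_pow hp0.le, ← Real.rpow_natCast]
    exact ENNReal.ofReal_le_ofReal
      (Real.rpow_le_rpow_of_exponent_ge hp0 hp1 (mem_filter.mp hT).2)
  calc μ {ω | k ≤ ∑ i, X i ω}
      ≤ ∑ T with k ≤ #T, μ (⋂ i ∈ T, {ω | X i ω = 1}) :=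
        measure_le_sum_le_sum_measure_iInter hX k
    _ ≤ #({T | k ≤ #T} : Finset (Finset ι)) • ENNReal.ofReal (p ^ k) :=
        sum_le_card_nsmul _ _ _ hterm
    _ ≤ Fintype.card (Finset ι) • ENNReal.ofReal (p ^ k) :=
        nsmul_le_nsmul_left zero_le (card_le_univ _)
    _ = 2 ^ Fintype.card ι * ENNReal.ofReal (p ^ k) := by
        rw [Fintype.card_finset, nsmul_eq_mul, Nat.cast_pow, Nat.cast_two]

lemma two_pow_mul_rpow_div_two {p : ℝ} (hp : 0 ≤ p) (N : ℕ) :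
    2 ^ N * p ^ ((N : ℝ) / 2) = (4 * p) ^ ((N : ℝ) / 2) := by
  rw [Real.mul_rpow (by norm_num) hp, show (4 : ℝ) = 2 ^ (2 : ℝ) by norm_num,
    ← Real.rpow_mul (by norm_num), mul_div_cancel₀ _ two_ne_zero, Real.rpow_natCast]

end

theorem bernoulli_half_deviation_general
    {Ω : Type*} [MeasurableSpace Ω] (μ : Measure Ω) [IsProbabilityMeasure μ]
    (N : ℕ) (p : ℝ) (hp0 : 0 < p) (hp : p < 1 / 2)
    (X : Fin N → Ω → ℝ) (hXm : ∀ i, Measurable (X i))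
    (hind : ProbabilityTheory.iIndepFun X μ)
    (h1 : ∀ i, μ {ω | X i ω = 1} = ENNReal.ofReal p)
    (h0 : ∀ i, μ {ω | X i ω = 0} = ENNReal.ofReal (1 - p)) :
    μ {ω | (N : ℝ) / 2 ≤ ∑ i, X i ω} ≤ ENNReal.ofReal ((8 * p) ^ ((N : ℝ) / 2)) := by
  have hp1 : p ≤ 1 := by linarith
  have hX : ∀ᵐ ω ∂μ, ∀ i, X i ω = 0 ∨ X i ω = 1 := ae_all_iff.mpr fun i =>
    ae_eq_zero_or_eq_one_of_measure_eq (hXm i) hp0.le hp1 (h1 i) (h0 i)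
  calc μ {ω | (N : ℝ) / 2 ≤ ∑ i, X i ω}
      ≤ 2 ^ N * ENNReal.ofReal (p ^ ((N : ℝ) / 2)) := by
        simpa using measure_le_sum_le_two_pow_mul hX hind hp0 hp1 h1 ((N : ℝ) / 2)
    _ = ENNReal.ofReal ((4 * p) ^ ((N : ℝ) / 2)) := by
        rw [← two_pow_mul_rpow_div_two hp0.le, ENNReal.ofReal_mul (by positivity),
          ENNReal.ofReal_pow zero_le_two, ENNReal.ofReal_ofNat]
    _ ≤ ENNReal.ofReal ((8 * p) ^ ((N : ℝ) / 2)) :=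
        ENNReal.ofReal_le_ofReal (Real.rpow_le_rpow (by positivity) (by linarith) (by positivity))

/-- If `X_1, …, X_N` are iid `Bernoulli(p)` random variables with
`0 < p < 1/2` and `S_N = X_1 + ⋯ + X_N`, then `P(S_N ≥ N/2) ≤ (8p)^{N/2}`. -/
theorem bernoulli_half_deviation
    {Ω : Type*} [MeasurableSpace Ω] (μ : Measure Ω) [IsProbabilityMeasure μ]
    (N : ℕ) (hN : 0 < N) (p : ℝ) (hp0 : 0 < p) (hp : p < 1 / 2)
    (X : Fin N → Ω → ℝ) (hXm : ∀ i, Measurable (X i))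
    (hind : ProbabilityTheory.iIndepFun X μ)
    (h1 : ∀ i, μ {ω | X i ω = 1} = ENNReal.ofReal p)
    (h0 : ∀ i, μ {ω | X i ω = 0} = ENNReal.ofReal (1 - p)) :
    μ {ω | (N : ℝ) / 2 ≤ ∑ i, X i ω} ≤ ENNReal.ofReal ((8 * p) ^ ((N : ℝ) / 2)) :=
  bernoulli_half_deviation_general μ N p hp0 hp X hXm hind h1 h0
end

section
/- Let μ be an admissible measure on a set 𝔹 ⊆ ℝ², let B ⊆ 𝔹 be a closed Euclidean ball of positive radius, set δ = μ(B), let α ∈ (0,1), and let x, y ∈ ∂B be points on the boundary circle of B. Then there exist closed Euclidean balls B', B'' ⊆ B such that μ(B') < α·δ, μ(B'') < (1−α)·δ, the union B' ∪ B'' is connected, and x, y ∈ B' ∪ B''. -/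
open MeasureTheory Metric Set

noncomputable section

/-- The Euclidean plane. -/
abbrev E2 := EuclideanSpace ℝ (Fin 2)

/-- A (Radon) measure `μ` is admissible on `A` if it is nonatomic and gives positive mass
to every open ball contained in `A`. -/
def Admissible (μ : Measure E2) (A : Set E2) : Prop :=
  (∀ x : E2, μ {x} = 0) ∧
  ∀ (x : E2) (r : ℝ), 0 < r → Metric.ball x r ⊆ A → 0 < μ (Metric.ball x r)

/-!
Grow the balls internally tangent to `B` at `x` and at `y` until their masses reach `α δ` and
`(1 - α) δ`; the mass is monotone and right continuous in the radius, so there are critical radii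
`t`, `u` at which these thresholds are first attained. If the two critical balls overlap, slightly
smaller ones still meet and are the balls sought. Otherwise they meet in at most one point, a
`μ`-null set, and `t + u ≤ ρ`, so `t² + u² < ρ²`: by area they miss an open ball inside `B`,
whose mass is positive by admissibility. Then `δ ≥ α δ + (1 - α) δ + (that mass) > δ`.
-/

open Filter Module
open scoped ENNReal

theorem Monotone.exists_forall_lt_and_le {β : Type*} [LinearOrder β] [TopologicalSpace β]
    [OrderClosedTopology β] {F : ℝ → β} (hF : Monotone F)
    (hcont : ∀ t, ContinuousWithinAt F (Ioi t) t) {m : β} {ρ : ℝ} (h0 : F 0 < m)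
    (hρ : m ≤ F ρ) : ∃ t ∈ Ioc 0 ρ, (∀ r < t, F r < m) ∧ m ≤ F t := by
  set S := {r | m ≤ F r}
  have hS_pos : ∀ r ∈ S, 0 < r := fun r hr =>
    lt_of_not_ge fun h => (h0.trans_le hr).not_ge (hF h)
  have hbdd : BddBelow S := ⟨0, fun r hr => (hS_pos r hr).le⟩
  set t := sInf S
  have ht : m ≤ F t := by
    refine _root_.ge_of_tendsto (hcont t) <|
      eventually_nhdsWithin_of_forall fun r (hr : t < r) => ?_
    obtain ⟨s, hs, hsr⟩ := exists_lt_of_csInf_lt ⟨ρ, hρ⟩ hr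
    exact hs.trans (hF hsr.le)
  exact ⟨t, ⟨hS_pos t ht, csInf_le hbdd hρ⟩,
    fun r hr => lt_of_not_ge fun h => (csInf_le hbdd h).not_gt hr, ht⟩

theorem pow_add_pow_lt_add_pow {R : Type*} [CommSemiring R] [LinearOrder R]
    [IsStrictOrderedRing R] {a b : R} {n : ℕ} (ha : 0 < a) (hb : 0 < b) (hn : 1 < n) :
    a ^ n + b ^ n < (a + b) ^ n := by
  obtain ⟨k, rfl⟩ : ∃ k, n = k + 1 + 1 := ⟨n - 2, by omega⟩
  calc a ^ (k + 1 + 1) + b ^ (k + 1 + 1) = a * a ^ (k + 1) + b * b ^ (k + 1) := by ring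
    _ < a * (a + b) ^ (k + 1) + b * (a + b) ^ (k + 1) := by
        gcongr
        exacts [lt_add_of_pos_right a hb, lt_add_of_pos_left b ha]
    _ = (a + b) ^ (k + 1 + 1) := by ring

theorem measure_lt_of_not_subset {X : Type*} [PseudoMetricSpace X] [MeasurableSpace X]
    [OpensMeasurableSpace X] {μ : Measure X} {U S T : Set X} (hU : IsOpen U) (hS : IsClosed S)
    (hUS : ¬U ⊆ S) (hST : S ⊆ T) (hUT : U ⊆ T)
    (hpos : ∀ w ε, 0 < ε → ball w ε ⊆ U → 0 < μ (ball w ε)) (hfin : μ S ≠ ∞) : μ S < μ T := by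
  obtain ⟨w, hwU, hwS⟩ := not_subset.1 hUS
  obtain ⟨ε, hε, hball⟩ := Metric.isOpen_iff.1 (hU.sdiff hS) w ⟨hwU, hwS⟩
  have hdisj : Disjoint S (ball w ε) := disjoint_right.2 fun _ h => (hball h).2
  calc μ S < μ S + μ (ball w ε) :=
        ENNReal.lt_add_right hfin (hpos w ε hε (hball.trans sdiff_subset)).ne'
    _ = μ (S ∪ ball w ε) := (measure_union hdisj measurableSet_ball).symm
    _ ≤ μ T := measure_mono (union_subset hST (hball.trans (sdiff_subset.trans hUT)))

section Balls

variable {E : Type*} [NormedAddCommGroup E] [NormedSpace ℝ E]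

theorem closedBall_inter_closedBall_nonempty {a b : E} {r₁ r₂ : ℝ} (h₁ : 0 ≤ r₁) (h₂ : 0 ≤ r₂)
    (h : dist a b ≤ r₁ + r₂) : (closedBall a r₁ ∩ closedBall b r₂).Nonempty := by
  rcases (add_nonneg h₁ h₂).eq_or_lt with hsum | hsum
  · obtain rfl : a = b := dist_le_zero.1 (h.trans hsum.ge)
    exact ⟨a, mem_closedBall_self h₁, mem_closedBall_self h₂⟩
  refine ⟨AffineMap.lineMap a b (r₁ / (r₁ + r₂)), ?_, ?_⟩
  · rw [mem_closedBall, dist_lineMap_left, Real.norm_of_nonneg (by positivity)]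
    calc r₁ / (r₁ + r₂) * dist a b ≤ r₁ / (r₁ + r₂) * (r₁ + r₂) := by gcongr
      _ = r₁ := div_mul_cancel₀ _ hsum.ne'
  · rw [mem_closedBall, dist_lineMap_right, one_sub_div hsum.ne', add_sub_cancel_left,
      Real.norm_of_nonneg (by positivity)]
    calc r₂ / (r₁ + r₂) * dist a b ≤ r₂ / (r₁ + r₂) * (r₁ + r₂) := by gcongr
      _ = r₂ := div_mul_cancel₀ _ hsum.ne'

theorem closedBall_inter_closedBall_subsingleton [StrictConvexSpace ℝ E] {a b : E} {t u : ℝ}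
    (h : t + u ≤ dist a b) : (closedBall a t ∩ closedBall b u).Subsingleton := by
  have key : ∀ w ∈ closedBall a t ∩ closedBall b u,
      w = AffineMap.lineMap a b (t / dist a b) := by
    rintro w ⟨hwa, hwb⟩
    rw [mem_closedBall, dist_comm] at hwa
    rw [mem_closedBall] at hwb
    have htri := dist_triangle a w b
    have hwa' : dist a w = t := by linarith
    have hwb' : dist w b = u := by linarith
    rcases (dist_nonneg (x := a) (y := b)).eq_or_lt with hd | hd
    · have : a = w := dist_le_zero.1 (by linarith [dist_nonneg (x := w) (y := b)])
      simp [← dist_le_zero.1 hd.symm.le, this]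
    · apply eq_lineMap_of_dist_eq_mul_of_dist_eq_mul
      · rw [div_mul_cancel₀ _ hd.ne', hwa']
      · rw [sub_mul, div_mul_cancel₀ _ hd.ne', one_mul, hwb']
        linarith
  exact fun w hw w' hw' => (key w hw).trans (key w' hw').symm

theorem not_ball_subset_closedBall_union [FiniteDimensional ℝ E] [MeasurableSpace E]
    [BorelSpace E] {a b c : E} {t u ρ : ℝ} (ht : 0 ≤ t) (hu : 0 ≤ u) (hρ : 0 ≤ ρ)
    (h : t ^ finrank ℝ E + u ^ finrank ℝ E < ρ ^ finrank ℝ E) :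
    ¬ball c ρ ⊆ closedBall a t ∪ closedBall b u := by
  intro hsub
  have : Nontrivial E := Module.nontrivial_of_finrank_pos <| Nat.pos_of_ne_zero fun h0 => by
    rw [h0] at h; norm_num at h
  set n := finrank ℝ E
  set μ : Measure E := Measure.addHaar
  have hV : μ (ball 0 1) ≠ 0 := (measure_ball_pos μ 0 one_pos).ne'
  have hV' : μ (ball 0 1) ≠ ∞ := measure_ball_lt_top.ne
  have hcover : ENNReal.ofReal (ρ ^ n) * μ (ball 0 1) ≤
      ENNReal.ofReal (t ^ n + u ^ n) * μ (ball 0 1) := by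
    rw [← μ.addHaar_ball c hρ, ENNReal.ofReal_add (by positivity) (by positivity), add_mul,
      ← μ.addHaar_closedBall a ht, ← μ.addHaar_closedBall b hu]
    exact (measure_mono hsub).trans (measure_union_le _ _)
  rw [ENNReal.mul_le_mul_iff_left hV hV', ENNReal.ofReal_le_ofReal_iff (by positivity)] at hcover
  exact hcover.not_gt h

theorem measure_closedBall_add_measure_closedBall_lt [StrictConvexSpace ℝ E]
    [FiniteDimensional ℝ E] [MeasurableSpace E] [BorelSpace E] {μ : Measure E}
    [NullSingletonClass μ] [IsLocallyFiniteMeasure μ] {a b c : E} {t u ρ : ℝ} (ht : 0 ≤ t)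
    (hu : 0 ≤ u) (hρ : 0 ≤ ρ) (hvol : t ^ finrank ℝ E + u ^ finrank ℝ E < ρ ^ finrank ℝ E)
    (hd : t + u ≤ dist a b) (ha : closedBall a t ⊆ closedBall c ρ)
    (hb : closedBall b u ⊆ closedBall c ρ)
    (hpos : ∀ w ε, 0 < ε → ball w ε ⊆ ball c ρ → 0 < μ (ball w ε)) :
    μ (closedBall a t) + μ (closedBall b u) < μ (closedBall c ρ) := by
  rw [← measure_union_add_inter _ measurableSet_closedBall,
    (closedBall_inter_closedBall_subsingleton hd).measure_zero, add_zero]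
  exact measure_lt_of_not_subset isOpen_ball (isClosed_closedBall.union isClosed_closedBall)
    (not_ball_subset_closedBall_union ht hu hρ hvol) (union_subset ha hb) ball_subset_closedBall
    hpos (measure_union_lt_top measure_closedBall_lt_top measure_closedBall_lt_top).ne

/-- For a unit vector `v`: the closed ball of radius `r` whose boundary passes through `z`
with inward normal `v` there. -/
def tangentBall (z v : E) (r : ℝ) : Set E := closedBall (z + r • v) r

variable {z v : E}

theorem dist_add_smul_add_smul (hv : ‖v‖ = 1) (r s : ℝ) :
    dist (z + r • v) (z + s • v) = |r - s| := by
  rw [dist_add_left, dist_eq_norm, ← sub_smul, norm_smul, hv, mul_one, Real.norm_eq_abs]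

theorem self_mem_tangentBall (hv : ‖v‖ = 1) {r : ℝ} (hr : 0 ≤ r) : z ∈ tangentBall z v r := by
  have := dist_add_smul_add_smul (z := z) hv r 0
  rw [zero_smul, add_zero, sub_zero, abs_of_nonneg hr] at this
  exact mem_closedBall'.2 this.le

theorem tangentBall_mono (hv : ‖v‖ = 1) : Monotone (tangentBall z v) := fun r s hrs =>
  closedBall_subset_closedBall' <| by
    rw [dist_add_smul_add_smul hv, abs_of_nonpos (by linarith)]
    linarith

theorem biInter_tangentBall_gt (hv : ‖v‖ = 1) (t : ℝ) :
    ⋂ r > t, tangentBall z v r = tangentBall z v t := by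
  refine Subset.antisymm (fun w hw => ?_) (subset_iInter₂ fun r hr => tangentBall_mono hv hr.le)
  rw [mem_iInter₂] at hw
  refine mem_closedBall.2 (le_of_forall_gt_imp_ge_of_dense fun a ha => ?_)
  have hmid : t < (t + a) / 2 := by linarith
  calc dist w (z + t • v)
      ≤ dist w (z + ((t + a) / 2) • v) + dist (z + ((t + a) / 2) • v) (z + t • v) :=
        dist_triangle _ _ _
    _ ≤ (t + a) / 2 + ((t + a) / 2 - t) := by
        rw [dist_add_smul_add_smul hv, abs_of_pos (by linarith)]
        exact add_le_add_left (mem_closedBall.1 (hw _ hmid)) _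
    _ = a := by ring

theorem continuousWithinAt_measure_tangentBall [MeasurableSpace E] [OpensMeasurableSpace E]
    [ProperSpace E] (μ : Measure E) [IsLocallyFiniteMeasure μ] (hv : ‖v‖ = 1) (t : ℝ) :
    ContinuousWithinAt (fun r => μ (tangentBall z v r)) (Ioi t) t := by
  have := tendsto_measure_biInter_gt (μ := μ) (s := tangentBall z v) (a := t)
    (fun _ _ => measurableSet_closedBall.nullMeasurableSet)
    (fun _ _ _ hij => tangentBall_mono hv hij)
    ⟨t + 1, by linarith, measure_closedBall_lt_top.ne⟩
  rwa [biInter_tangentBall_gt hv] at this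

theorem exists_tangentBall_threshold [MeasurableSpace E] [OpensMeasurableSpace E] [ProperSpace E]
    (μ : Measure E) [IsLocallyFiniteMeasure μ] [NullSingletonClass μ] (hv : ‖v‖ = 1)
    {m : ℝ≥0∞} {ρ : ℝ} (hm : 0 < m) (hρ : m ≤ μ (tangentBall z v ρ)) :
    ∃ t ∈ Ioc 0 ρ, (∀ r < t, μ (tangentBall z v r) < m) ∧ m ≤ μ (tangentBall z v t) :=
  Monotone.exists_forall_lt_and_le (fun _ _ h => measure_mono (tangentBall_mono hv h))
    (continuousWithinAt_measure_tangentBall μ hv) (by simpa [tangentBall] using hm) hρ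

theorem exists_norm_eq_one_add_smul_eq {x c : E} {ρ : ℝ} (hρ : 0 < ρ) (hx : dist x c = ρ) :
    ∃ v : E, ‖v‖ = 1 ∧ x + ρ • v = c :=
  ⟨ρ⁻¹ • (c - x), by rw [norm_smul, ← dist_eq_norm', hx, norm_inv, Real.norm_of_nonneg hρ.le,
      inv_mul_cancel₀ hρ.ne'],
    by rw [smul_smul, mul_inv_cancel₀ hρ.ne', one_smul, add_sub_cancel]⟩

theorem add_le_of_le_dist_add_smul {x y v w c : E} (hv : ‖v‖ = 1) (hw : ‖w‖ = 1) {t u ρ : ℝ}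
    (hxv : x + ρ • v = c) (hyw : y + ρ • w = c) (htρ : t ≤ ρ) (huρ : u ≤ ρ)
    (hd : t + u ≤ dist (x + t • v) (y + u • w)) : t + u ≤ ρ := by
  have hx : dist (x + t • v) c = ρ - t := by
    rw [← hxv, dist_add_smul_add_smul hv, abs_of_nonpos (by linarith), neg_sub]
  have hy : dist c (y + u • w) = ρ - u := by
    rw [← hyw, dist_add_smul_add_smul hw, abs_of_nonneg (by linarith)]
  linarith [dist_triangle (x + t • v) c (y + u • w)]

theorem exists_tangentBall_inter_nonempty {x y v w : E} (hv : ‖v‖ = 1) (hw : ‖w‖ = 1)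
    {t u : ℝ} (ht : 0 < t) (hu : 0 < u) (h : dist (x + t • v) (y + u • w) < t + u) :
    ∃ r₁ ∈ Ioo 0 t, ∃ r₂ ∈ Ioo 0 u, (tangentBall x v r₁ ∩ tangentBall y w r₂).Nonempty := by
  set d := dist (x + t • v) (y + u • w)
  set ε := min (min t u / 2) ((t + u - d) / 4)
  have hε : 0 < ε := lt_min (by positivity) (by linarith)
  have hεtu : ε ≤ min t u / 2 := min_le_left _ _
  have hεd : ε ≤ (t + u - d) / 4 := min_le_right _ _
  have ht' := min_le_left t u
  have hu' := min_le_right t u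
  refine ⟨t - ε, ⟨by linarith, by linarith⟩, u - ε, ⟨by linarith, by linarith⟩,
    closedBall_inter_closedBall_nonempty (by linarith) (by linarith) ?_⟩
  calc dist (x + (t - ε) • v) (y + (u - ε) • w)
      ≤ dist (x + (t - ε) • v) (x + t • v) + d + dist (y + u • w) (y + (u - ε) • w) :=
        dist_triangle4 _ _ _ _
    _ = ε + d + ε := by
        rw [dist_add_smul_add_smul hv, dist_add_smul_add_smul hw, sub_sub_cancel_left,
          sub_sub_cancel, abs_neg, abs_of_pos hε]
    _ ≤ t - ε + (u - ε) := by linarith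

variable [StrictConvexSpace ℝ E] [FiniteDimensional ℝ E] [MeasurableSpace E] [BorelSpace E]
  {μ : Measure E} [NullSingletonClass μ] [IsLocallyFiniteMeasure μ] {c : E} {ρ : ℝ}

theorem dist_lt_of_measure_le_tangentBall (hdim : 2 ≤ finrank ℝ E) {x y v w : E}
    (hv : ‖v‖ = 1) (hw : ‖w‖ = 1) (hxv : x + ρ • v = c) (hyw : y + ρ • w = c) {t u : ℝ}
    (ht : 0 < t) (hu : 0 < u) (htρ : t ≤ ρ) (huρ : u ≤ ρ)
    (hpos : ∀ z ε, 0 < ε → ball z ε ⊆ ball c ρ → 0 < μ (ball z ε))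
    (hmass : μ (closedBall c ρ) ≤ μ (tangentBall x v t) + μ (tangentBall y w u)) :
    dist (x + t • v) (y + u • w) < t + u := by
  by_contra! hd
  have htu := add_le_of_le_dist_add_smul hv hw hxv hyw htρ huρ hd
  have hvol : t ^ finrank ℝ E + u ^ finrank ℝ E < ρ ^ finrank ℝ E :=
    (pow_add_pow_lt_add_pow ht hu hdim).trans_le (pow_le_pow_left₀ (by positivity) htu _)
  refine hmass.not_gt (measure_closedBall_add_measure_closedBall_lt ht.le hu.le
    (ht.le.trans htρ) hvol hd ?_ ?_ hpos)
  · exact hxv ▸ tangentBall_mono hv htρ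
  · exact hyw ▸ tangentBall_mono hw huρ

theorem exists_tangentBalls_isConnected_union (hdim : 2 ≤ finrank ℝ E) (hρ : 0 < ρ)
    (hpos : ∀ z ε, 0 < ε → ball z ε ⊆ ball c ρ → 0 < μ (ball z ε)) {m₁ m₂ : ℝ≥0∞}
    (hm₁ : 0 < m₁) (hm₂ : 0 < m₂) (hm : m₁ + m₂ = μ (closedBall c ρ)) {x y : E}
    (hx : x ∈ sphere c ρ) (hy : y ∈ sphere c ρ) :
    ∃ (c₁ c₂ : E) (r₁ r₂ : ℝ),
      closedBall c₁ r₁ ⊆ closedBall c ρ ∧ closedBall c₂ r₂ ⊆ closedBall c ρ ∧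
      μ (closedBall c₁ r₁) < m₁ ∧ μ (closedBall c₂ r₂) < m₂ ∧
      IsConnected (closedBall c₁ r₁ ∪ closedBall c₂ r₂) ∧
      x ∈ closedBall c₁ r₁ ∪ closedBall c₂ r₂ ∧ y ∈ closedBall c₁ r₁ ∪ closedBall c₂ r₂ := by
  obtain ⟨v, hv, hxv⟩ := exists_norm_eq_one_add_smul_eq hρ (mem_sphere.1 hx)
  obtain ⟨w, hw, hyw⟩ := exists_norm_eq_one_add_smul_eq hρ (mem_sphere.1 hy)
  have hBx : tangentBall x v ρ = closedBall c ρ := by rw [tangentBall, hxv]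
  have hBy : tangentBall y w ρ = closedBall c ρ := by rw [tangentBall, hyw]
  obtain ⟨t, ⟨ht, htρ⟩, hlt₁, hle₁⟩ :=
    exists_tangentBall_threshold μ hv hm₁ (hBx ▸ le_self_add.trans_eq hm)
  obtain ⟨u, ⟨hu, huρ⟩, hlt₂, hle₂⟩ :=
    exists_tangentBall_threshold μ hw hm₂ (hBy ▸ le_add_self.trans_eq hm)
  have hd := dist_lt_of_measure_le_tangentBall hdim hv hw hxv hyw ht hu htρ huρ hpos
    (hm ▸ add_le_add hle₁ hle₂)
  obtain ⟨r₁, hr₁, r₂, hr₂, hne⟩ := exists_tangentBall_inter_nonempty hv hw ht hu hd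
  exact ⟨_, _, r₁, r₂, (tangentBall_mono hv (hr₁.2.le.trans htρ)).trans hBx.le,
    (tangentBall_mono hw (hr₂.2.le.trans huρ)).trans hBy.le, hlt₁ r₁ hr₁.2, hlt₂ r₂ hr₂.2,
    (isConnected_closedBall hr₁.1.le).union hne (isConnected_closedBall hr₂.1.le),
    Or.inl (self_mem_tangentBall hv hr₁.1.le), Or.inr (self_mem_tangentBall hw hr₂.1.le)⟩

end Balls

/-- Let `μ` be admissible on `𝔹`, let `B ⊆ 𝔹` be a closed ball of positive
radius with `δ = μ(B)`, let `α ∈ (0,1)`, and let `x, y ∈ ∂B`.  Then there are closed balls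
`B', B'' ⊆ B` with `μ(B') < α·δ`, `μ(B'') < (1−α)·δ`, `B' ∪ B''` connected, and
`x, y ∈ B' ∪ B''`. -/
theorem internal_tangent_balls
    (μ : Measure E2) [IsLocallyFiniteMeasure μ] (𝔹 : Set E2) (hadm : Admissible μ 𝔹)
    (c : E2) (ρ : ℝ) (hρ : 0 < ρ) (hB : Metric.closedBall c ρ ⊆ 𝔹)
    (α : ℝ) (hα : α ∈ Set.Ioo (0 : ℝ) 1)
    (x y : E2) (hx : x ∈ Metric.sphere c ρ) (hy : y ∈ Metric.sphere c ρ) :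
    ∃ (c₁ c₂ : E2) (r₁ r₂ : ℝ),
      Metric.closedBall c₁ r₁ ⊆ Metric.closedBall c ρ ∧
      Metric.closedBall c₂ r₂ ⊆ Metric.closedBall c ρ ∧
      μ (Metric.closedBall c₁ r₁) < ENNReal.ofReal α * μ (Metric.closedBall c ρ) ∧
      μ (Metric.closedBall c₂ r₂) < ENNReal.ofReal (1 - α) * μ (Metric.closedBall c ρ) ∧
      IsConnected (Metric.closedBall c₁ r₁ ∪ Metric.closedBall c₂ r₂) ∧
      x ∈ Metric.closedBall c₁ r₁ ∪ Metric.closedBall c₂ r₂ ∧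
      y ∈ Metric.closedBall c₁ r₁ ∪ Metric.closedBall c₂ r₂ := by
  obtain ⟨hatom, hpos⟩ := hadm
  have : NullSingletonClass μ := ⟨hatom⟩
  have hpos_ball : ∀ z ε, 0 < ε → ball z ε ⊆ ball c ρ → 0 < μ (ball z ε) := fun z ε hε h =>
    hpos z ε hε (h.trans (ball_subset_closedBall.trans hB))
  have hδ : μ (closedBall c ρ) ≠ 0 :=
    ((hpos_ball c ρ hρ subset_rfl).trans_le (measure_mono ball_subset_closedBall)).ne'
  refine exists_tangentBalls_isConnected_union (by rw [finrank_euclideanSpace_fin]) hρ hpos_ball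
    (ENNReal.mul_pos (ENNReal.ofReal_pos.2 hα.1).ne' hδ)
    (ENNReal.mul_pos (ENNReal.ofReal_pos.2 (sub_pos.2 hα.2)).ne' hδ) ?_ hx hy
  rw [← add_mul, ← ENNReal.ofReal_add hα.1.le (sub_nonneg.2 hα.2.le), add_sub_cancel,
    ENNReal.ofReal_one, one_mul]

end
end

section
/- Let 𝔹 ⊆ ℝ² be a nonempty open set, let R, δ > 0, and let μ be a locally finite Borel measure on the open R-neighbourhood of 𝔹. Then for every path π in 𝔹, the (μ,𝔹,δ,R)-graph length is unchanged if one restricts to balls with rational data: d_{μ,𝔹,δ,R}(π) = inf{ Σ_{k=1}^n κ_δ(μ(B_k)) : n ∈ ℕ and B_1,…,B_n are closed Euclidean balls with centres in 𝔹 ∩ ℚ² and radii in (0,R) ∩ ℚ such that π ⊆ B_1 ∪ ⋯ ∪ B_n }. -/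
open MeasureTheory Metric Set ENNReal
open scoped Classical

noncomputable section

/-- `κ_δ(t) = max {1, t/δ}`, in `ℝ≥0∞`. -/
def kappa (δ : ℝ) (t : ℝ≥0∞) : ℝ≥0∞ := max 1 (t / ENNReal.ofReal δ)

/-- `π` is a path in `B`: a continuous image of `[0,1]` contained in `B`. -/
def IsPathIn (B π : Set E2) : Prop :=
  (∃ f : ℝ → E2, ContinuousOn f (Set.Icc 0 1) ∧ π = f '' Set.Icc 0 1) ∧ π ⊆ B

/-- The `(μ,B,δ,R)`-graph length of a path `π`: the infimum of `Σ κ_δ(μ(B_k))` over finite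
covers of `π` by closed balls with centres in `B` and radii in `(0,R)`. -/
def glen (μ : Measure E2) (B : Set E2) (δ R : ℝ) (π : Set E2) : ℝ≥0∞ :=
  ⨅ (n : ℕ) (c : Fin n → E2) (r : Fin n → ℝ)
    (_ : ∀ i, c i ∈ B) (_ : ∀ i, r i ∈ Set.Ioo 0 R)
    (_ : π ⊆ ⋃ i, Metric.closedBall (c i) (r i)),
    ∑ i, kappa δ (μ (Metric.closedBall (c i) (r i)))

/-- The `(μ,B,δ,R)`-graph distance between points `x, y ∈ B`. -/
def gdist (μ : Measure E2) (B : Set E2) (δ R : ℝ) (x y : E2) : ℝ≥0∞ :=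
  if x = y then 0 else
    ⨅ (π : Set E2) (_ : IsPathIn B π) (_ : x ∈ π) (_ : y ∈ π), glen μ B δ R π

/-- As `glen`, but restricting to balls with rational centres and rational radii. -/
def glenQ (μ : Measure E2) (B : Set E2) (δ R : ℝ) (π : Set E2) : ℝ≥0∞ :=
  ⨅ (n : ℕ) (c : Fin n → E2) (r : Fin n → ℝ)
    (_ : ∀ i, c i ∈ B) (_ : ∀ i, ∃ q₁ q₂ : ℚ, c i 0 = (q₁ : ℝ) ∧ c i 1 = (q₂ : ℝ))
    (_ : ∀ i, r i ∈ Set.Ioo 0 R) (_ : ∀ i, ∃ q : ℚ, (q : ℝ) = r i)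
    (_ : π ⊆ ⋃ i, Metric.closedBall (c i) (r i)),
    ∑ i, kappa δ (μ (Metric.closedBall (c i) (r i)))

/-!
Every admissible rational cover is an admissible cover, so `glen ≤ glenQ`. Conversely, given
a ball `B(c, r)` of a cover and any `s > r`, density of `ℚ²` yields a rational ball
`B(c', q)` with `B(c, r) ⊆ B(c', q) ⊆ B(c, s)` and `c'` still in the open set `𝔹`. Since `μ` is
finite on compact balls, `μ (B(c, s)) → μ (B(c, r))` as `s ↓ r` (continuity from above), so each
ball of a cover can be traded for a rational one at an arbitrarily small cost in `κ_δ`.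
-/

open Filter Topology

lemma kappa_mono (δ : ℝ) : Monotone (kappa δ) :=
  fun _ _ h => max_le_max le_rfl (ENNReal.div_le_div_right h _)

lemma kappa_add_le (δ : ℝ) (a η : ℝ≥0∞) :
    kappa δ (a + η) ≤ kappa δ a + η / ENNReal.ofReal δ := by
  rw [kappa, kappa, ENNReal.add_div]
  exact max_le (le_add_right (le_max_left _ _)) (by gcongr; exact le_max_right _ _)

lemma eventually_measure_closedBall_lt {α : Type*} [PseudoMetricSpace α] [ProperSpace α]
    [MeasurableSpace α] [OpensMeasurableSpace α] (μ : Measure α) [IsLocallyFiniteMeasure μ]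
    (x : α) (r : ℝ) {η : ℝ≥0∞} (hη : η ≠ 0) :
    ∀ᶠ s in 𝓝[>] r, μ (closedBall x s) < μ (closedBall x r) + η := by
  have hlim := tendsto_measure_biInter_gt (μ := μ) (s := closedBall x) (a := r)
    (fun _ _ => measurableSet_closedBall.nullMeasurableSet)
    (fun _ _ _ hij => closedBall_subset_closedBall hij)
    ⟨r + 1, by linarith, measure_closedBall_lt_top.ne⟩
  rw [biInter_gt_closedBall] at hlim
  exact hlim.eventually_lt_const (ENNReal.lt_add_right measure_closedBall_lt_top.ne hη)

def IsRatPoint (x : E2) : Prop := ∃ q₁ q₂ : ℚ, x 0 = (q₁ : ℝ) ∧ x 1 = (q₂ : ℝ)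

lemma dense_isRatPoint : Dense {x : E2 | IsRatPoint x} := by
  have hdense : Dense {x : E2 | ∀ i ∈ univ, x i ∈ range ((↑) : ℚ → ℝ)} :=
    (dense_pi univ fun _ _ => Rat.denseRange_cast).preimage (PiLp.homeomorph 2 _).isOpenMap
  refine hdense.mono fun x hx => ?_
  obtain ⟨⟨q₁, hq₁⟩, ⟨q₂, hq₂⟩⟩ := And.intro (hx 0 trivial) (hx 1 trivial)
  exact ⟨q₁, q₂, hq₁.symm, hq₂.symm⟩

lemma exists_rat_closedBall_between {U : Set E2} (hU : IsOpen U) {c : E2} (hc : c ∈ U)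
    {r s : ℝ} (hrs : r < s) :
    ∃ c' ∈ U, IsRatPoint c' ∧ ∃ q : ℚ, r < q ∧ q < s ∧
      closedBall c r ⊆ closedBall c' q ∧ closedBall c' q ⊆ closedBall c s := by
  obtain ⟨c', hc'Q, hc'U, hcc'⟩ := dense_isRatPoint.exists_mem_open
    (hU.inter isOpen_ball) ⟨c, hc, mem_ball_self (half_pos (sub_pos.2 hrs))⟩
  rw [mem_ball, dist_comm] at hcc'
  obtain ⟨q, hrq, hqs⟩ := exists_rat_btwn (show r + dist c c' < s - dist c c' by linarith)
  have hd := dist_nonneg (x := c) (y := c')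
  refine ⟨c', hc'U, hc'Q, q, by linarith, by linarith,
    closedBall_subset_closedBall' hrq.le, closedBall_subset_closedBall' ?_⟩
  rw [dist_comm]
  linarith

lemma exists_rat_closedBall_superset_kappa_le (μ : Measure E2) [IsLocallyFiniteMeasure μ]
    {U : Set E2} (hU : IsOpen U) {c : E2} (hc : c ∈ U) {δ R r : ℝ} (hδ : 0 < δ)
    (hr : r ∈ Ioo 0 R) {ε : ℝ≥0∞} (hε : ε ≠ 0) :
    ∃ (c' : E2) (r' : ℝ), c' ∈ U ∧ IsRatPoint c' ∧ r' ∈ Ioo 0 R ∧ (∃ q : ℚ, (q : ℝ) = r') ∧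
      closedBall c r ⊆ closedBall c' r' ∧
      kappa δ (μ (closedBall c' r')) ≤ kappa δ (μ (closedBall c r)) + ε := by
  have hδ₀ : ENNReal.ofReal δ ≠ 0 := by simpa using hδ
  obtain ⟨s, hs, hsR⟩ := ((eventually_measure_closedBall_lt μ c r
    (mul_ne_zero hε hδ₀)).and (Ioo_mem_nhdsGT hr.2)).exists
  obtain ⟨c', hc'U, hc'Q, q, hrq, hqs, hsub, hsup⟩ := exists_rat_closedBall_between hU hc hsR.1
  refine ⟨c', q, hc'U, hc'Q, ⟨hr.1.trans hrq, hqs.trans hsR.2⟩, ⟨q, rfl⟩, hsub, ?_⟩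
  calc kappa δ (μ (closedBall c' q))
      ≤ kappa δ (μ (closedBall c r) + ε * ENNReal.ofReal δ) :=
        kappa_mono δ ((measure_mono hsup).trans hs.le)
    _ ≤ kappa δ (μ (closedBall c r)) + ε := by
        simpa only [ENNReal.mul_div_cancel_right hδ₀ ENNReal.ofReal_ne_top]
          using kappa_add_le δ _ (ε * ENNReal.ofReal δ)

section GraphLength

variable {μ : Measure E2} {𝔹 : Set E2} {δ R : ℝ} {π : Set E2}

lemma glen_le_sum {n : ℕ} {c : Fin n → E2} {r : Fin n → ℝ} (hc : ∀ i, c i ∈ 𝔹)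
    (hr : ∀ i, r i ∈ Ioo 0 R) (hcov : π ⊆ ⋃ i, closedBall (c i) (r i)) :
    glen μ 𝔹 δ R π ≤ ∑ i, kappa δ (μ (closedBall (c i) (r i))) :=
  iInf_le_of_le n <| iInf_le_of_le c <| iInf_le_of_le r <| iInf_le_of_le hc <|
    iInf_le_of_le hr <| iInf_le_of_le hcov le_rfl

lemma glenQ_le_sum {n : ℕ} {c : Fin n → E2} {r : Fin n → ℝ} (hc : ∀ i, c i ∈ 𝔹)
    (hcQ : ∀ i, IsRatPoint (c i)) (hr : ∀ i, r i ∈ Ioo 0 R) (hrQ : ∀ i, ∃ q : ℚ, (q : ℝ) = r i)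
    (hcov : π ⊆ ⋃ i, closedBall (c i) (r i)) :
    glenQ μ 𝔹 δ R π ≤ ∑ i, kappa δ (μ (closedBall (c i) (r i))) :=
  iInf_le_of_le n <| iInf_le_of_le c <| iInf_le_of_le r <| iInf_le_of_le hc <|
    iInf_le_of_le hcQ <| iInf_le_of_le hr <| iInf_le_of_le hrQ <| iInf_le_of_le hcov le_rfl

lemma glen_le_glenQ : glen μ 𝔹 δ R π ≤ glenQ μ 𝔹 δ R π := by
  simp only [glenQ, le_iInf_iff]
  exact fun _ _ _ hc _ hr _ hcov => glen_le_sum hc hr hcov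

lemma glenQ_le_glen [IsLocallyFiniteMeasure μ] (h𝔹 : IsOpen 𝔹) (hδ : 0 < δ) :
    glenQ μ 𝔹 δ R π ≤ glen μ 𝔹 δ R π := by
  simp only [glen, le_iInf_iff]
  intro n c r hc hr hcov
  refine ENNReal.le_of_forall_pos_le_add fun ε hε _ => ?_
  -- for `n = 0` the junk value `ε / 0 = ∞` is harmless, as `n * (ε / n) = 0`
  have hεn : (ε : ℝ≥0∞) / n ≠ 0 := by simpa using hε.ne'
  choose c' r' hc' hc'Q hr' hr'Q hsub hkappa using fun i =>
    exists_rat_closedBall_superset_kappa_le μ h𝔹 (hc i) hδ (hr i) hεn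
  calc glenQ μ 𝔹 δ R π
      ≤ ∑ i, kappa δ (μ (closedBall (c' i) (r' i))) :=
        glenQ_le_sum hc' hc'Q hr' hr'Q (hcov.trans (iUnion_mono hsub))
    _ ≤ ∑ i, (kappa δ (μ (closedBall (c i) (r i))) + ε / n) :=
        Finset.sum_le_sum fun i _ => hkappa i
    _ = ∑ i, kappa δ (μ (closedBall (c i) (r i))) + n * (ε / n) := by
        simp [Finset.sum_add_distrib]
    _ ≤ ∑ i, kappa δ (μ (closedBall (c i) (r i))) + ε := by
        gcongr
        exact ENNReal.mul_div_le

end GraphLength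

theorem glen_rational_data_general
    (μ : Measure E2) [IsLocallyFiniteMeasure μ] (𝔹 : Set E2)
    (hBo : IsOpen 𝔹)
    (δ R : ℝ) (hδ : 0 < δ)
    (π : Set E2) :
    glen μ 𝔹 δ R π = glenQ μ 𝔹 δ R π :=
  glen_le_glenQ.antisymm (glenQ_le_glen hBo hδ)

/-- For a nonempty open set `𝔹 ⊆ ℝ²` and a locally finite Borel measure
`μ`, the `(μ,𝔹,δ,R)`-graph length of any path in `𝔹` is unchanged if one restricts to
covering balls with rational centres and rational radii. -/
theorem glen_rational_data
    (μ : Measure E2) [IsLocallyFiniteMeasure μ] (𝔹 : Set E2)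
    (hBo : IsOpen 𝔹) (hBne : 𝔹.Nonempty)
    (δ R : ℝ) (hδ : 0 < δ) (hR : 0 < R)
    (π : Set E2) (hπ : IsPathIn 𝔹 π) :
    glen μ 𝔹 δ R π = glenQ μ 𝔹 δ R π :=
  glen_rational_data_general μ 𝔹 hBo δ R hδ π

end
end
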